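/- Let G be a Tanner graph with a rooted tree decomposition, and let t be a forget node with single child t' forgetting a variable node v, i.e. B_t = B_{t'} \ {v} with v ∈ B_{t'} ∩ L. Then for every R' ⊆ B_t^c and Q ⊆ B_t^v, a set S is a trapping set with parameters (R',Q) in G_t if and only if S is a trapping set with parameters (R',Q) in G_{t'} or S is a trapping set with parameters (R',Q ∪ {v}) in G_{t'}; moreover these two alternatives are mutually exclusive. -/

import Mathlib

/-! Since `t'` is the only child of `t` and `B_t ⊆ B_{t'}`, the descendants of `t` contribute
no vertex beyond those below `t'`, so `G_t = G_{t'}` and the odd-neighbourhood sets agree.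
Only the trace on the bag changes: `S ∩ B_{t'}^v` is `S ∩ B_t^v` when `v ∉ S` and
`(S ∩ B_t^v) ∪ {v}` when `v ∈ S`, and since `v ∉ Q` exactly one of these can equal the
prescribed trace. -/

/-- A Tanner graph: a bipartite graph on vertex set `V` partitioned into
variable nodes `L` and check nodes `R`, every edge joining `L` and `R`. -/
structure TannerGraph (V : Type*) where
  G : SimpleGraph V
  L : Set V
  R : Set V
  disj : Disjoint L R
  cover : L ∪ R = Set.univ
  bipartite : ∀ ⦃u v⦄, G.Adj u v → (u ∈ L ∧ v ∈ R) ∨ (u ∈ R ∧ v ∈ L)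

/-- `Γ_o(G[S])`: check nodes having an odd number of neighbours in `S`. -/
def TannerGraph.Gamma {V : Type*} (TG : TannerGraph V) (S : Set V) : Set V :=
  {c | c ∈ TG.R ∧ Odd ((TG.G.neighborSet c ∩ S).ncard)}

/-- A rooted tree decomposition of the graph `G`: `T` is a finite tree with
root `root` and bags `B i ⊆ V` covering all vertices and edges, such that for
every vertex the set of bags containing it induces a connected subgraph of `T`. -/
structure IsRootedTreeDecomp {V ι : Type*} (G : SimpleGraph V)
    (T : SimpleGraph ι) (root : ι) (B : ι → Set V) : Prop where
  isTree : T.IsTree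
  covers : ∀ v, ∃ i, v ∈ B i
  coversEdge : ∀ ⦃u v⦄, G.Adj u v → ∃ i, u ∈ B i ∧ v ∈ B i
  connBags : ∀ v, (T.induce {i | v ∈ B i}).Connected

/-- `Desc T root t i`: `i` is a descendant of `t` in the tree `T` rooted at
`root`, i.e. `t` lies on a path from the root to `i` (`t` itself included). -/
def Desc {ι : Type*} (T : SimpleGraph ι) (root : ι) (t i : ι) : Prop :=
  ∃ p : T.Walk root i, p.IsPath ∧ t ∈ p.support

/-- `IsChildOf T root s t`: `s` is a child of `t` in the rooted tree. -/
def IsChildOf {ι : Type*} (T : SimpleGraph ι) (root : ι) (s t : ι) : Prop :=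
  T.Adj t s ∧ Desc T root t s

/-- `∪_{i ∈ T_t} B_i`: union of the bags over all descendants of `t`;
this is the vertex set of the induced subgraph `G_t`. -/
def subVerts {V ι : Type*} (T : SimpleGraph ι) (root : ι) (B : ι → Set V)
    (t : ι) : Set V :=
  {v | ∃ i, Desc T root t i ∧ v ∈ B i}

/-- `Γ_o(G_t[S])`, where `W` is the vertex set of `G_t`: check nodes of `G_t`
having an odd number of `G_t`-neighbours in `S`. -/
def GammaLoc {V : Type*} (TG : TannerGraph V) (W S : Set V) : Set V :=
  {c | c ∈ TG.R ∧ c ∈ W ∧ Odd ((TG.G.neighborSet c ∩ W ∩ S).ncard)}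

/-- `S` is a trapping set with parameters `(R', Q)` in `G_t`, where `W` is the
vertex set of `G_t` and `Bt` is the bag at `t`. -/
def HasParams {V : Type*} (TG : TannerGraph V) (W Bt S R' Q : Set V) : Prop :=
  S.Nonempty ∧ S ⊆ W ∩ TG.L ∧ S ∩ (Bt ∩ TG.L) = Q ∧ GammaLoc TG W S = R'

/-- `S` is a trapping set with extended parameters `(I, Q, d)` in `G_t`. -/
def HasExtParams {V : Type*} (TG : TannerGraph V) (W Bt S I Q : Set V)
    (d : ℕ) : Prop :=
  S.Nonempty ∧ S ⊆ W ∩ TG.L ∧ S ∩ (Bt ∩ TG.L) = Q ∧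
    GammaLoc TG W S ∩ (Bt ∩ TG.R) = I ∧ (GammaLoc TG W S \ (Bt ∩ TG.R)).ncard = d

/-- `Γ_o(G_t[Q ∪ B_t^c]) = {c ∈ B_t^c : |N_{G_t}(c) ∩ Q| is odd}`. -/
def GammaBag {V : Type*} (TG : TannerGraph V) (W Bt Q : Set V) : Set V :=
  {c | c ∈ Bt ∩ TG.R ∧ Odd ((TG.G.neighborSet c ∩ W ∩ Q).ncard)}

open SimpleGraph

section Descendants

variable {ι : Type*} {T : SimpleGraph ι} {root : ι}

lemma Desc.exists_isChildOf_of_ne {t i : ι} (h : Desc T root t i) (hne : i ≠ t) :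
    ∃ s, IsChildOf T root s t ∧ Desc T root s i := by
  classical
  obtain ⟨p, hp, ht⟩ := h
  have hsplit := p.take_spec ht
  cases hdrop : p.dropUntil t ht with
  | nil => exact absurd rfl hne
  | @cons _ s _ hadj q =>
    rw [hdrop, ← Walk.concat_append] at hsplit
    have hprefix : ((p.takeUntil t ht).concat hadj).IsPath :=
      (congrArg Walk.IsPath hsplit ▸ hp).of_append_left
    have hts : t ∈ ((p.takeUntil t ht).concat hadj).support := by
      simp [Walk.support_concat]
    have hsp : s ∈ p.support := by
      rw [← hsplit, Walk.mem_support_append_iff]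
      exact Or.inr q.start_mem_support
    exact ⟨s, ⟨hadj, _, hprefix, hts⟩, p, hp, hsp⟩

lemma Desc.trans (hT : T.IsAcyclic) {t s i : ι} (hts : Desc T root t s)
    (hsi : Desc T root s i) : Desc T root t i := by
  classical
  obtain ⟨q, hq, htq⟩ := hts
  obtain ⟨p, hp, hsp⟩ := hsi
  have hunique : q = p.takeUntil s hsp :=
    congrArg Subtype.val ((hT.subsingleton_path _ _).elim ⟨q, hq⟩ ⟨_, hp.takeUntil hsp⟩)
  exact ⟨p, hp, p.support_takeUntil_subset_support hsp (hunique ▸ htq)⟩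

end Descendants

lemma subVerts_eq_of_unique_child {V ι : Type*} {T : SimpleGraph ι} {root : ι}
    {B : ι → Set V} (hT : T.IsAcyclic) {t t' : ι} (hchild : IsChildOf T root t' t)
    (honly : ∀ s, IsChildOf T root s t → s = t') (hsub : B t ⊆ B t') :
    subVerts T root B t = subVerts T root B t' := by
  ext x
  constructor
  · rintro ⟨i, hi, hx⟩
    by_cases hit : i = t
    · subst hit
      obtain ⟨q, hq, -⟩ := hchild.2
      exact ⟨t', ⟨q, hq, q.end_mem_support⟩, hsub hx⟩
    · obtain ⟨s, hs, hsi⟩ := hi.exists_isChildOf_of_ne hit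
      exact ⟨i, honly s hs ▸ hsi, hx⟩
  · rintro ⟨i, hi, hx⟩
    exact ⟨i, hchild.2.trans hT hi, hx⟩

namespace Set

variable {α : Type*} {S A Q : Set α} {v : α}

lemma inter_insert_eq_iff (hvQ : v ∉ Q) :
    S ∩ insert v A = Q ↔ v ∉ S ∧ S ∩ A = Q := by
  by_cases hvS : v ∈ S
  · simp only [inter_insert_of_mem hvS, hvS, not_true, false_and, iff_false]
    exact fun h => hvQ (h ▸ mem_insert v _)
  · simp [inter_insert_of_notMem hvS, hvS]

lemma inter_insert_eq_insert_iff (hvA : v ∉ A) (hvQ : v ∉ Q) :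
    S ∩ insert v A = insert v Q ↔ v ∈ S ∧ S ∩ A = Q := by
  by_cases hvS : v ∈ S
  · simp only [inter_insert_of_mem hvS, hvS, true_and]
    constructor
    · intro h
      rw [← insert_sdiff_self_of_notMem (fun h => hvA h.2 : v ∉ S ∩ A), h,
        insert_sdiff_self_of_notMem hvQ]
    · rintro rfl; rfl
  · simp only [inter_insert_of_notMem hvS, hvS, false_and, iff_false]
    exact fun h => hvS (h ▸ mem_insert v Q).1

end Set

section Params

variable {V : Type*} {TG : TannerGraph V} {W Bt Bt' S R' Q : Set V} {v : V}

lemma hasParams_iff_of_forget (hv : v ∈ Bt' ∩ TG.L) (hBt : Bt = Bt' \ {v}) (hvQ : v ∉ Q) :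
    HasParams TG W Bt S R' Q ↔
      HasParams TG W Bt' S R' Q ∨ HasParams TG W Bt' S R' (Q ∪ {v}) := by
  have hvBt : v ∉ Bt ∩ TG.L := fun h => (hBt ▸ h.1 : v ∈ Bt' \ {v}).2 rfl
  have hbag : Bt' ∩ TG.L = insert v (Bt ∩ TG.L) := by
    rw [hBt, ← Set.inter_sdiff_right_comm, Set.insert_sdiff_singleton,
      Set.insert_eq_of_mem hv]
  simp only [HasParams, hbag, Set.union_singleton, Set.inter_insert_eq_iff hvQ,
    Set.inter_insert_eq_insert_iff hvBt hvQ]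
  by_cases hvS : v ∈ S <;> simp [hvS]

lemma not_hasParams_and_hasParams_union_singleton (hvQ : v ∉ Q) :
    ¬ (HasParams TG W Bt S R' Q ∧ HasParams TG W Bt S R' (Q ∪ {v})) := by
  rintro ⟨⟨-, -, hQ, -⟩, ⟨-, -, hQv, -⟩⟩
  exact hvQ (hQ ▸ hQv ▸ Or.inr rfl)

end Params

theorem stmt_11_general {V ι : Type*}
    (TG : TannerGraph V) (T : SimpleGraph ι) (root : ι) (B : ι → Set V)
    (hD : IsRootedTreeDecomp TG.G T root B)
    (t t' : ι) (hchild : IsChildOf T root t' t)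
    (honly : ∀ s, IsChildOf T root s t → s = t')
    (v : V) (hv : v ∈ B t' ∩ TG.L) (hBt : B t = B t' \ {v})
    (R' Q : Set V) (hQ : Q ⊆ B t ∩ TG.L)
    (S : Set V) :
    (HasParams TG (subVerts T root B t) (B t) S R' Q ↔
      (HasParams TG (subVerts T root B t') (B t') S R' Q ∨
       HasParams TG (subVerts T root B t') (B t') S R' (Q ∪ {v}))) ∧
    ¬ (HasParams TG (subVerts T root B t') (B t') S R' Q ∧
       HasParams TG (subVerts T root B t') (B t') S R' (Q ∪ {v})) := by
  have hvQ : v ∉ Q := fun h => (hBt ▸ (hQ h).1 : v ∈ B t' \ {v}).2 rfl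
  rw [subVerts_eq_of_unique_child hD.isTree.isAcyclic hchild honly (hBt ▸ Set.sdiff_subset)]
  exact ⟨hasParams_iff_of_forget hv hBt hvQ, not_hasParams_and_hasParams_union_singleton hvQ⟩

/-- forget-variable-node rule. -/
theorem stmt_11 {V ι : Type*} [Fintype V] [Fintype ι]
    (TG : TannerGraph V) (T : SimpleGraph ι) (root : ι) (B : ι → Set V)
    (hD : IsRootedTreeDecomp TG.G T root B)
    (t t' : ι) (hchild : IsChildOf T root t' t)
    (honly : ∀ s, IsChildOf T root s t → s = t')
    (v : V) (hv : v ∈ B t' ∩ TG.L) (hBt : B t = B t' \ {v})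
    (R' Q : Set V) (hR' : R' ⊆ B t ∩ TG.R) (hQ : Q ⊆ B t ∩ TG.L)
    (S : Set V) :
    (HasParams TG (subVerts T root B t) (B t) S R' Q ↔
      (HasParams TG (subVerts T root B t') (B t') S R' Q ∨
       HasParams TG (subVerts T root B t') (B t') S R' (Q ∪ {v}))) ∧
    ¬ (HasParams TG (subVerts T root B t') (B t') S R' Q ∧
       HasParams TG (subVerts T root B t') (B t') S R' (Q ∪ {v})) :=
  stmt_11_general TG T root B hD t t' hchild honly v hv hBt R' Q hQ S
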